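/- arXiv:2205.13179 — 3 statements merged into one kernel-verified Lean document; each statement's English description precedes it below -/
import Mathlib

section
/- Let {A_n} and {B_n} be sequences of positive semidefinite Hermitian matrices, where A_n and B_n are n×n complex matrices. If {A_n + B_n} converges to the zero sequence in Type 1 strong cluster sense, then both {A_n} and {B_n} converge to the zero sequence in Type 1 strong cluster sense. -/
open MeasureTheory Matrix AddCircle
open scoped Real ComplexOrder

noncomputable section

instance : Fact (0 < 2 * Real.pi) := ⟨by positivity⟩

/-- The circle of circumference `2π`. -/
abbrev 𝕋 : Type := AddCircle (2 * Real.pi)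

/-- The `n × n` Toeplitz matrix of `f`, with `(i,j)` entry the Fourier coefficient
`f̂(i - j)`. -/
def toeplitz (n : ℕ) (f : 𝕋 → ℂ) : Matrix (Fin n) (Fin n) ℂ :=
  Matrix.of fun i j : Fin n => fourierCoeff f (((i : ℕ) : ℤ) - ((j : ℕ) : ℤ))

/-- The operator (spectral) norm of a complex `n × n` matrix. -/
def opNorm {n : ℕ} (A : Matrix (Fin n) (Fin n) ℂ) : ℝ :=
  ‖Matrix.toEuclideanCLM (𝕜 := ℂ) A‖

/-- A sequence of matrices `{Aₙ}` converges to the zero sequence in Type 2 strong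
cluster sense: for every `ε > 0` there are `N₁, N₂` such that for `n > N₂` one can
split `Aₙ = Rₙ + Eₙ` with `rank Rₙ ≤ N₁` and `‖Eₙ‖ < ε`. -/
def Type2StrongCluster (A : ∀ n : ℕ, Matrix (Fin n) (Fin n) ℂ) : Prop :=
  ∀ ε > (0 : ℝ), ∃ N₁ N₂ : ℕ, ∀ n : ℕ, N₂ < n →
    ∃ R E : Matrix (Fin n) (Fin n) ℂ, A n = R + E ∧ R.rank ≤ N₁ ∧ opNorm E < ε

/-- A sequence of Hermitian matrices `{Aₙ}` converges to the zero sequence in Type 1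
strong cluster sense: for every `ε > 0` there are `N₁, N₂` such that for `n > N₂`, at
most `N₁` of the eigenvalues of `Aₙ` lie outside `(-ε, ε)`. -/
def Type1StrongCluster (A : ∀ n : ℕ, Matrix (Fin n) (Fin n) ℂ)
    (hA : ∀ n, (A n).IsHermitian) : Prop :=
  ∀ ε > (0 : ℝ), ∃ N₁ N₂ : ℕ, ∀ n : ℕ, N₂ < n →
    {i : Fin n | ε ≤ |(hA n).eigenvalues i|}.ncard ≤ N₁

/-- `f` has vanishing mean oscillation: with `F` the `2π`-periodic lift of `f`, the
`L²` mean oscillation of `F` over intervals `I` tends to `0` as `|I| → 0`. -/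
def VMO (f : 𝕋 → ℂ) : Prop :=
  ∀ ε > (0 : ℝ), ∃ δ > (0 : ℝ), ∀ a b : ℝ, a < b → b - a < δ →
    Real.sqrt ((b - a)⁻¹ *
      ∫ t in a..b, ‖f (t : 𝕋) - (b - a)⁻¹ • ∫ s in a..b, f (s : 𝕋)‖ ^ 2) < ε

/-!
If `A ≤ C` in the Loewner order, then `C` has at least as many eigenvalues `≥ ε` as `A`.
Otherwise the span of the eigenvectors of `A` with eigenvalue `≥ ε` and the span of the
eigenvectors of `C` with eigenvalue `< ε` have dimensions adding up to more than `n`, so they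
share a vector `x ≠ 0`, and `ε ‖x‖² ≤ ⟪A x, x⟫ ≤ ⟪C x, x⟫ < ε ‖x‖²`. Apply this with
`C = A + B`, whose difference with `A` or `B` is positive semidefinite; for a positive
semidefinite matrix the moduli of the eigenvalues are the eigenvalues themselves.
-/

open scoped InnerProductSpace

section EigenbasisCount

variable {𝕜 E ι : Type*} [RCLike 𝕜] [NormedAddCommGroup E] [InnerProductSpace 𝕜 E] [Fintype ι]

theorem OrthonormalBasis.inner_eq_zero_of_mem_span_image (b : OrthonormalBasis ι 𝕜 E)
    {s : Set ι} {i : ι} (hi : i ∉ s) {x : E} (hx : x ∈ Submodule.span 𝕜 (b '' s)) :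
    ⟪b i, x⟫_𝕜 = 0 := by
  obtain ⟨l, hl, rfl⟩ := (Finsupp.mem_span_image_iff_linearCombination 𝕜).1 hx
  rw [inner_eq_zero_symm]
  exact b.orthonormal.inner_finsupp_eq_zero hi hl

theorem OrthonormalBasis.finrank_span_image (b : OrthonormalBasis ι 𝕜 E) (s : Set ι) :
    Module.finrank 𝕜 (Submodule.span 𝕜 (b '' s)) = s.ncard := by
  classical
  rw [Set.image_eq_range, finrank_span_eq_card (b := fun i : s => b i)
      (b.orthonormal.linearIndependent.comp _ Subtype.val_injective),
    ← Nat.card_eq_fintype_card, Nat.card_coe_set_eq]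

namespace LinearMap.IsSymmetric

variable {T : E →ₗ[𝕜] E} {b : OrthonormalBasis ι 𝕜 E} {μ : ι → ℝ}

theorem re_inner_apply_self_eq_sum (hT : T.IsSymmetric) (hb : ∀ i, T (b i) = (μ i : 𝕜) • b i)
    (x : E) :
    RCLike.re ⟪T x, x⟫_𝕜 = ∑ i, μ i * ‖⟪b i, x⟫_𝕜‖ ^ 2 := by
  have hterm (i : ι) : ⟪T x, b i⟫_𝕜 * ⟪b i, x⟫_𝕜 = ((μ i * ‖⟪b i, x⟫_𝕜‖ ^ 2 : ℝ) : 𝕜) := by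
    rw [hT, hb, inner_smul_right, mul_assoc, ← inner_conj_symm x, RCLike.conj_mul]
    push_cast; ring
  rw [← b.sum_inner_mul_inner, Finset.sum_congr rfl fun i _ => hterm i, ← RCLike.ofReal_sum,
    RCLike.ofReal_re]

theorem mul_sq_norm_le_re_inner_apply_self (hT : T.IsSymmetric)
    (hb : ∀ i, T (b i) = (μ i : 𝕜) • b i) {ε : ℝ} {x : E}
    (hx : x ∈ Submodule.span 𝕜 (b '' {i | ε ≤ μ i})) :
    ε * ‖x‖ ^ 2 ≤ RCLike.re ⟪T x, x⟫_𝕜 := by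
  rw [hT.re_inner_apply_self_eq_sum hb, ← b.sum_sq_norm_inner_right, Finset.mul_sum]
  refine Finset.sum_le_sum fun i _ => ?_
  by_cases hi : ε ≤ μ i
  · gcongr
  · simp [b.inner_eq_zero_of_mem_span_image hi hx]

theorem re_inner_apply_self_lt_mul_sq_norm (hT : T.IsSymmetric)
    (hb : ∀ i, T (b i) = (μ i : 𝕜) • b i) {ε : ℝ} {x : E} (hx0 : x ≠ 0)
    (hx : x ∈ Submodule.span 𝕜 (b '' {i | μ i < ε})) :
    RCLike.re ⟪T x, x⟫_𝕜 < ε * ‖x‖ ^ 2 := by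
  have hterm (i : ι) (hi : ⟪b i, x⟫_𝕜 ≠ 0) :
      μ i * ‖⟪b i, x⟫_𝕜‖ ^ 2 < ε * ‖⟪b i, x⟫_𝕜‖ ^ 2 := by
    have : μ i < ε := by_contra fun h => hi (b.inner_eq_zero_of_mem_span_image h hx)
    gcongr
  obtain ⟨i₀, hi₀⟩ : ∃ i, ⟪b i, x⟫_𝕜 ≠ 0 := by
    by_contra! h
    exact hx0 (by simpa [h] using (b.sum_repr' x).symm)
  rw [hT.re_inner_apply_self_eq_sum hb, ← b.sum_sq_norm_inner_right, Finset.mul_sum]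
  refine Finset.sum_lt_sum (fun i _ => ?_) ⟨i₀, Finset.mem_univ _, hterm i₀ hi₀⟩
  by_cases hi : ⟪b i, x⟫_𝕜 = 0
  · simp [hi]
  · exact (hterm i hi).le

end LinearMap.IsSymmetric

theorem LinearMap.ncard_eigenvalues_ge_le_of_isPositive_sub {S T : E →ₗ[𝕜] E}
    (hS : S.IsSymmetric) (hT : T.IsSymmetric) {b c : OrthonormalBasis ι 𝕜 E} {μ ν : ι → ℝ}
    (hb : ∀ i, S (b i) = (μ i : 𝕜) • b i) (hc : ∀ i, T (c i) = (ν i : 𝕜) • c i)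
    (hTS : (T - S).IsPositive) (ε : ℝ) :
    {i | ε ≤ μ i}.ncard ≤ {i | ε ≤ ν i}.ncard := by
  have : FiniteDimensional 𝕜 E := b.toBasis.finiteDimensional_of_finite
  have hdisj : Disjoint (Submodule.span 𝕜 (b '' {i | ε ≤ μ i}))
      (Submodule.span 𝕜 (c '' {i | ν i < ε})) := by
    refine Submodule.disjoint_def.2 fun x hxS hxT => by_contra fun hx0 => ?_
    have hle : RCLike.re ⟪S x, x⟫_𝕜 ≤ RCLike.re ⟪T x, x⟫_𝕜 := by
      simpa [inner_sub_left] using hTS.re_inner_nonneg_left x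
    linarith [hS.mul_sq_norm_le_re_inner_apply_self hb hxS,
      hT.re_inner_apply_self_lt_mul_sq_norm hc hx0 hxT]
  have hdim := Submodule.finrank_add_finrank_le_of_disjoint hdisj
  have hsplit := Set.ncard_add_ncard_compl {i | ε ≤ ν i}
  rw [b.finrank_span_image, c.finrank_span_image, Module.finrank_eq_card_basis b.toBasis] at hdim
  simp only [Set.compl_ofPred, not_le, Nat.card_eq_fintype_card] at hsplit
  omega

end EigenbasisCount

namespace Matrix.IsHermitian

variable {𝕜 n : Type*} [RCLike 𝕜] [Fintype n] [DecidableEq n]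

theorem toEuclideanLin_eigenvectorBasis {A : Matrix n n 𝕜} (hA : A.IsHermitian) (i : n) :
    toEuclideanLin A (hA.eigenvectorBasis i) = (hA.eigenvalues i : 𝕜) • hA.eigenvectorBasis i := by
  ext j
  rw [ofLp_toLpLin, toLin'_apply, hA.mulVec_eigenvectorBasis,
    RCLike.real_smul_eq_coe_smul (K := 𝕜)]
  rfl

theorem ncard_eigenvalues_ge_le_of_posSemidef_sub {A C : Matrix n n 𝕜} (hA : A.IsHermitian)
    (hC : C.IsHermitian) (hCA : (C - A).PosSemidef) (ε : ℝ) :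
    {i | ε ≤ hA.eigenvalues i}.ncard ≤ {i | ε ≤ hC.eigenvalues i}.ncard :=
  LinearMap.ncard_eigenvalues_ge_le_of_isPositive_sub (isSymmetric_toEuclideanLin_iff.2 hA)
    (isSymmetric_toEuclideanLin_iff.2 hC) hA.toEuclideanLin_eigenvectorBasis
    hC.toEuclideanLin_eigenvectorBasis
    (map_sub toEuclideanLin C A ▸ isPositive_toEuclideanLin_iff.2 hCA) ε

end Matrix.IsHermitian

theorem Type1StrongCluster.of_posSemidef_sub {A C : ∀ n : ℕ, Matrix (Fin n) (Fin n) ℂ}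
    (hA : ∀ n, (A n).PosSemidef) {hC : ∀ n, (C n).IsHermitian}
    (hCA : ∀ n, (C n - A n).PosSemidef) (h : Type1StrongCluster C hC) :
    Type1StrongCluster A fun n => (hA n).isHermitian := by
  intro ε hε
  obtain ⟨N₁, N₂, hN⟩ := h ε hε
  refine ⟨N₁, N₂, fun n hn => ?_⟩
  calc {i | ε ≤ |(hA n).isHermitian.eigenvalues i|}.ncard
      = {i | ε ≤ (hA n).isHermitian.eigenvalues i}.ncard := by
        simp only [abs_of_nonneg ((hA n).eigenvalues_nonneg _)]
    _ ≤ {i | ε ≤ (hC n).eigenvalues i}.ncard :=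
        (hA n).isHermitian.ncard_eigenvalues_ge_le_of_posSemidef_sub (hC n) (hCA n) ε
    _ ≤ {i | ε ≤ |(hC n).eigenvalues i|}.ncard :=
        Set.ncard_le_ncard (Set.ofPred_subset_ofPred.2 fun _ hi => hi.trans (le_abs_self _))
    _ ≤ N₁ := hN n hn

/-- Lemma 2.3 of the paper: if `{Aₙ}` and `{Bₙ}` are sequences of
positive semidefinite matrices and `{Aₙ + Bₙ}` converges to the zero sequence in
Type 1 strong cluster sense, then so do `{Aₙ}` and `{Bₙ}`. -/
theorem type1StrongCluster_of_add_posSemidef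
    (A B : ∀ n : ℕ, Matrix (Fin n) (Fin n) ℂ)
    (hA : ∀ n, (A n).PosSemidef) (hB : ∀ n, (B n).PosSemidef)
    (h : Type1StrongCluster (fun n => A n + B n)
      (fun n => (hA n).isHermitian.add (hB n).isHermitian)) :
    Type1StrongCluster A (fun n => (hA n).isHermitian) ∧
      Type1StrongCluster B (fun n => (hB n).isHermitian) :=
  ⟨h.of_posSemidef_sub hA fun n => (add_sub_cancel_left (A n) (B n)).symm ▸ hB n,
    h.of_posSemidef_sub hB fun n => (add_sub_cancel_right (A n) (B n)).symm ▸ hA n⟩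
end
end

section
/- Let f be a square-integrable function on the circle 𝕋 = AddCircle (2π) and let n ≥ 1. Then both matrices T_n(|f|²) − T_n(f̄)·T_n(f) and T_n(|f|²) − T_n(f)·T_n(f̄) are Hermitian positive semidefinite. -/
/-! For `x ∈ ℂⁿ` let `p = ∑ⱼ xⱼ eⱼ` be the trigonometric polynomial with coefficients `x`.
The vector `Tₙ(h) x` lists the Fourier coefficients of `h p` in degrees `0, …, n - 1`, so
`⟪Tₙ(|f|²) x, x⟫ = ‖f p‖₂²` while `⟪Tₙ(f̄) Tₙ(f) x, x⟫ = ∑_{k < n} |(f p)^(k)|²`, and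
Bessel's inequality compares the two. The second semicommutator is the first one for `f̄`,
because `Tₙ(f̄) = Tₙ(f)ᴴ`. -/

open MeasureTheory Matrix AddCircle
open scoped Real ComplexOrder

noncomputable section

open scoped ComplexConjugate

namespace MeasureTheory

variable {X : Type*} [TopologicalSpace X] [CompactSpace X] [MeasurableSpace X]
  [OpensMeasurableSpace X] {μ : Measure X}

lemma MemLp.mul_continuousMap {p : ENNReal} {g : X → ℂ} (hg : MemLp g p μ) (φ : C(X, ℂ)) :
    MemLp (fun t => g t * φ t) p μ :=
  hg.of_le_mul (hg.1.mul φ.continuous.aestronglyMeasurable) <| .of_forall fun t => by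
    rw [norm_mul, mul_comm]
    exact mul_le_mul_of_nonneg_right (φ.norm_coe_le_norm t) (norm_nonneg _)

lemma Integrable.mul_continuousMap {g : X → ℂ} (hg : Integrable g μ) (φ : C(X, ℂ)) :
    Integrable (fun t => g t * φ t) μ :=
  hg.mul_bdd φ.continuous.aestronglyMeasurable (.of_forall φ.norm_coe_le_norm)

end MeasureTheory

lemma MeasureTheory.MemLp.integrable_mul_conj {X : Type*} [MeasurableSpace X] {μ : Measure X}
    {g : X → ℂ} (hg : MemLp g 2 μ) : Integrable (fun t => g t * conj (g t)) μ := by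
  simp only [Complex.mul_conj', ← Complex.ofReal_pow]
  exact (hg.integrable_norm_pow (p := 2) two_ne_zero).ofReal (𝕜 := ℂ)

section Fourier

variable {T : ℝ}

def trigPoly {n : ℕ} (x : Fin n → ℂ) : C(AddCircle T, ℂ) :=
  ∑ j : Fin n, x j • fourier ((j : ℕ) : ℤ)

lemma trigPoly_apply {n : ℕ} (x : Fin n → ℂ) (t : AddCircle T) :
    trigPoly x t = ∑ j : Fin n, x j * fourier ((j : ℕ) : ℤ) t := by
  simp [trigPoly, ContinuousMap.sum_apply]

variable [Fact (0 < T)]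

lemma fourierCoeff_conj (g : AddCircle T → ℂ) (k : ℤ) :
    fourierCoeff (fun t => conj (g t)) k = conj (fourierCoeff g (-k)) := by
  simp only [fourierCoeff, ← integral_conj, smul_eq_mul, map_mul, neg_neg, ← fourier_neg]

lemma fourierCoeff_fourier_mul (g : AddCircle T → ℂ) (j k : ℤ) :
    fourierCoeff (fun t => fourier j t * g t) k = fourierCoeff g (k - j) := by
  simp only [fourierCoeff, smul_eq_mul, ← mul_assoc, ← fourier_add,
    show -(k - j) = -k + j by ring]

lemma fourierCoeff_mul_trigPoly {g : AddCircle T → ℂ} (hg : Integrable g haarAddCircle)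
    {n : ℕ} (x : Fin n → ℂ) (k : ℤ) :
    fourierCoeff (fun t => g t * trigPoly x t) k
      = ∑ j : Fin n, x j * fourierCoeff g (k - (j : ℕ)) := by
  have hsum : (fun t => g t * trigPoly x t)
      = ∑ j : Fin n, fun t => x j * (fourier ((j : ℕ) : ℤ) t * g t) := by
    ext t
    simp only [trigPoly_apply, Finset.mul_sum, Finset.sum_apply]
    exact Finset.sum_congr rfl fun j _ => by ring
  rw [hsum, fourierCoeff.sum _ (fun j t => x j * (fourier ((j : ℕ) : ℤ) t * g t))
    fun j _ => (hg.fourier_smul _).const_mul (x j)]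
  simp only [Finset.sum_apply, fourierCoeff.const_mul, fourierCoeff_fourier_mul]

lemma integral_conj_trigPoly_mul {g : AddCircle T → ℂ} (hg : Integrable g haarAddCircle)
    {n : ℕ} (x : Fin n → ℂ) :
    ∫ t, conj (trigPoly x t) * g t ∂haarAddCircle
      = ∑ i : Fin n, conj (x i) * fourierCoeff g (i : ℕ) := by
  simp only [trigPoly_apply, map_sum, map_mul, ← fourier_neg, Finset.sum_mul, mul_assoc]
  rw [integral_finsetSum _ (f := fun i t => conj (x i) * (fourier (-((i : ℕ) : ℤ)) t * g t))
    fun i _ => (hg.fourier_smul _).const_mul _]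
  simp only [integral_const_mul, fourierCoeff, smul_eq_mul]

lemma sum_sq_fourierCoeff_le {G : AddCircle T → ℂ} (hG : MemLp G 2 haarAddCircle)
    (s : Finset ℤ) :
    ∑ k ∈ s, ‖fourierCoeff G k‖ ^ 2 ≤ ∫ t, ‖G t‖ ^ 2 ∂haarAddCircle := by
  have hparseval := hasSum_sq_fourierCoeff (hG.toLp G)
  have hnorm :
      ∫ t, ‖hG.toLp G t‖ ^ 2 ∂haarAddCircle = ∫ t, ‖G t‖ ^ 2 ∂haarAddCircle :=
    integral_congr_ae <| hG.coeFn_toLp.fun_comp fun z => ‖z‖ ^ 2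
  rw [fourierCoeff_congr_ae hG.coeFn_toLp, hnorm] at hparseval
  exact sum_le_hasSum s (fun _ _ => sq_nonneg _) hparseval

end Fourier

section Toeplitz

variable {n : ℕ}

lemma conjTranspose_toeplitz (f : 𝕋 → ℂ) :
    (toeplitz n f)ᴴ = toeplitz n (fun t => conj (f t)) := by
  ext i j
  simp [toeplitz, conjTranspose_apply, fourierCoeff_conj]

lemma isHermitian_toeplitz {h : 𝕋 → ℂ} (hh : ∀ t, conj (h t) = h t) :
    (toeplitz n h).IsHermitian := by
  rw [IsHermitian, conjTranspose_toeplitz]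
  simp only [hh]

lemma toeplitz_mulVec {h : 𝕋 → ℂ} (hh : Integrable h haarAddCircle) (x : Fin n → ℂ)
    (i : Fin n) :
    (toeplitz n h *ᵥ x) i = fourierCoeff (fun t => h t * trigPoly x t) (i : ℕ) := by
  rw [fourierCoeff_mul_trigPoly hh]
  simp only [mulVec, dotProduct, toeplitz, of_apply, mul_comm]

lemma dotProduct_toeplitz_mulVec {h : 𝕋 → ℂ} (hh : Integrable h haarAddCircle)
    (x : Fin n → ℂ) :
    star x ⬝ᵥ (toeplitz n h *ᵥ x)
      = ∫ t, conj (trigPoly x t) * (h t * trigPoly x t) ∂haarAddCircle := by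
  rw [integral_conj_trigPoly_mul (hh.mul_continuousMap _)]
  simp only [dotProduct, toeplitz_mulVec hh, Pi.star_apply, RCLike.star_def]

end Toeplitz

theorem posSemidef_toeplitz_mul_conj_sub_conjTranspose_mul {g : 𝕋 → ℂ}
    (hg : MemLp g 2 haarAddCircle) (n : ℕ) :
    (toeplitz n (fun t => g t * conj (g t)) - (toeplitz n g)ᴴ * toeplitz n g).PosSemidef := by
  refine posSemidef_iff_dotProduct_mulVec.mpr ⟨?_, fun x => ?_⟩
  · exact (isHermitian_toeplitz fun t => by simp [mul_comm]).sub
      (posSemidef_conjTranspose_mul_self _).isHermitian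
  have hquad : star x ⬝ᵥ (toeplitz n (fun t => g t * conj (g t)) *ᵥ x)
      = ((∫ t, ‖g t * trigPoly x t‖ ^ 2 ∂haarAddCircle : ℝ) : ℂ) := by
    rw [dotProduct_toeplitz_mulVec hg.integrable_mul_conj, ← integral_complex_ofReal]
    congr with t
    rw [Complex.ofReal_pow, ← Complex.mul_conj', map_mul]
    ring
  have hgram : star x ⬝ᵥ (((toeplitz n g)ᴴ * toeplitz n g) *ᵥ x)
      = ((∑ i : Fin n, ‖fourierCoeff (fun t => g t * trigPoly x t) i‖ ^ 2 : ℝ) : ℂ) := by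
    rw [← mulVec_mulVec, dotProduct_mulVec, ← star_mulVec]
    simp only [dotProduct, Pi.star_apply, RCLike.star_def, Complex.conj_mul',
      toeplitz_mulVec (hg.integrable one_le_two), Complex.ofReal_sum, Complex.ofReal_pow]
  rw [sub_mulVec, dotProduct_sub, hquad, hgram, ← Complex.ofReal_sub, Complex.zero_le_real,
    sub_nonneg]
  let e : Fin n ↪ ℤ := Fin.valEmbedding.trans Nat.castEmbedding
  simpa [e] using sum_sq_fourierCoeff_le (hg.mul_continuousMap (trigPoly x)) (Finset.univ.map e)

theorem semicommutator_posSemidef_general (f : 𝕋 → ℂ)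
    (hf : MemLp f 2 haarAddCircle) (n : ℕ) :
    (toeplitz n (fun x => f x * (starRingEnd ℂ) (f x))
      - (toeplitz n f)ᴴ * toeplitz n f).PosSemidef ∧
    (toeplitz n (fun x => f x * (starRingEnd ℂ) (f x))
      - toeplitz n f * (toeplitz n f)ᴴ).PosSemidef := by
  refine ⟨posSemidef_toeplitz_mul_conj_sub_conjTranspose_mul hf n, ?_⟩
  have h := posSemidef_toeplitz_mul_conj_sub_conjTranspose_mul (g := fun t => conj (f t))
    hf.star n
  simpa only [Pi.star_apply, RCLike.star_def, Complex.conj_conj, mul_comm (conj (f _)),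
    ← conjTranspose_toeplitz, conjTranspose_conjTranspose] using h

/-- for `f ∈ L²(𝕋)` and `n ≥ 1`, both semicommutator matrices
`Tₙ(|f|²) − Tₙ(f̄)·Tₙ(f)` and `Tₙ(|f|²) − Tₙ(f)·Tₙ(f̄)` are Hermitian positive
semidefinite.  Here `Tₙ(f̄) = (Tₙ f)ᴴ` and `|f|² = f·f̄`. -/
theorem semicommutator_posSemidef (f : 𝕋 → ℂ)
    (hf : MemLp f 2 haarAddCircle) (n : ℕ) (hn : 1 ≤ n) :
    (toeplitz n (fun x => f x * (starRingEnd ℂ) (f x))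
      - (toeplitz n f)ᴴ * toeplitz n f).PosSemidef ∧
    (toeplitz n (fun x => f x * (starRingEnd ℂ) (f x))
      - toeplitz n f * (toeplitz n f)ᴴ).PosSemidef :=
  semicommutator_posSemidef_general f hf n
end
end

section
/- Let f be a square-integrable function on the circle 𝕋 = AddCircle (2π). Then for every n ≥ 1 and all 0 ≤ j, k < n, the (j,k) entry of the matrix T_n(|f|²) − T_n(f)·T_n(f̄) equals Σ_{m=1}^{∞} f̂(j+m)·conj(f̂(k+m)) + Σ_{m=0}^{∞} f̂(j−n−m)·conj(f̂(k−n−m)), where both series converge absolutely; in particular T_n(|f|²) − T_n(f)·T_n(f̄) is the sum of two positive semidefinite Gram matrices. -/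
open MeasureTheory Matrix AddCircle
open scoped Real ComplexOrder

noncomputable section

/-! The `(j, k)` entry of `Tₙ(f f̄)` is the Fourier coefficient of `f f̄` at `j - k`, which by the
polarized Parseval identity (applied to `f` and `f · e_{j-k}`) equals `∑_{s ∈ ℤ} f̂(j-s) conj f̂(k-s)`.
The terms with `0 ≤ s < n` make up the `(j, k)` entry of `Tₙ(f) Tₙ(f)ᴴ`; those with `s < 0` and
`s ≥ n` are the two remaining series. Each of those is an inner product of shifted coefficient
sequences in `ℓ²(ℕ)`, so it converges absolutely and the two matrices are Gram matrices. -/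

open ComplexConjugate Function

theorem Memℓp.comp_injective {α β E : Type*} [NormedAddCommGroup E] {p : ENNReal}
    (hp : 0 < p.toReal) {f : α → E} (hf : Memℓp f p) {φ : β → α} (hφ : Injective φ) :
    Memℓp (f ∘ φ) p :=
  memℓp_gen (((memℓp_gen_iff hp).1 hf).comp_injective hφ)

theorem Memℓp.summable_norm_mul_conj {κ : Type*} {c d : κ → ℂ} (hc : Memℓp c 2)
    (hd : Memℓp d 2) : Summable fun m => ‖c m * conj (d m)‖ :=
  (lp.summable_mul (by norm_num [Real.holderConjugate_iff]) (⟨c, hc⟩ : lp (fun _ : κ => ℂ) 2)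
    (⟨d, hd⟩ : lp (fun _ : κ => ℂ) 2)).congr fun m => by simp

theorem Matrix.posSemidef_of_tsum_mul_conj {ι κ : Type*} [Finite ι] (c : ι → κ → ℂ)
    (hc : ∀ i, Memℓp (c i) 2) :
    (Matrix.of fun i j => ∑' m, c i m * conj (c j m)).PosSemidef := by
  have h : (Matrix.of fun i j => ∑' m, c i m * conj (c j m)) =
      gram ℂ fun i => (⟨(star (c i) : κ → ℂ), (hc i).star_mem⟩ : lp (fun _ : κ => ℂ) 2) := by
    ext i j
    simp [gram_apply, lp.inner_eq_tsum, mul_comm]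
  exact h ▸ posSemidef_gram ℂ _

theorem tsum_int_eq_tsum_neg_add_sum_add_tsum {E : Type*} [NormedAddCommGroup E] [CompleteSpace E]
    {b : ℤ → E} (hb : Summable b) (n : ℕ) :
    ∑' s, b s = ∑' m : ℕ, b (-(m + 1)) + (∑ i ∈ Finset.range n, b i + ∑' m : ℕ, b (m + n)) := by
  have hnat : Summable fun m : ℕ => b m := hb.comp_injective Nat.cast_injective
  have hneg : Summable fun m : ℕ => b (-(m + 1)) :=
    hb.comp_injective (i := fun m : ℕ => -((m : ℤ) + 1)) fun _ _ h => by simpa using h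
  rw [(hnat.hasSum.of_nat_of_neg_add_one hneg.hasSum).tsum_eq, ← hnat.sum_add_tsum_nat_add n]
  push_cast
  abel

section FourierL2

variable {T : ℝ} [Fact (0 < T)]

theorem memℓp_fourierCoeff {f : AddCircle T → ℂ} (hf : MemLp f 2 haarAddCircle) :
    Memℓp (fourierCoeff f) 2 := by
  have h : ⇑(fourierBasis.repr (hf.toLp f)) = fourierCoeff f := funext fun i => by
    rw [fourierBasis_repr, fourierCoeff_congr_ae hf.coeFn_toLp]
  exact h ▸ (fourierBasis.repr (hf.toLp f)).2

theorem hasSum_fourierCoeff_mul_conj {f g : AddCircle T → ℂ} (hf : MemLp f 2 haarAddCircle)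
    (hg : MemLp g 2 haarAddCircle) :
    HasSum (fun i => fourierCoeff f i * conj (fourierCoeff g i))
      (∫ t, f t * conj (g t) ∂haarAddCircle) := by
  have H := fourierBasis.hasSum_inner_mul_inner (hg.toLp g) (hf.toLp f)
  have hterm : ∀ i, fourierCoeff f i * conj (fourierCoeff g i) =
      inner ℂ (hg.toLp g) (fourierBasis i) * inner ℂ (fourierBasis i) (hf.toLp f) := fun i => by
    rw [← inner_conj_symm (hg.toLp g), ← fourierBasis.repr_apply_apply,
      ← fourierBasis.repr_apply_apply, fourierBasis_repr, fourierBasis_repr,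
      fourierCoeff_congr_ae hf.coeFn_toLp, fourierCoeff_congr_ae hg.coeFn_toLp, mul_comm]
  have hsum : ∫ t, f t * conj (g t) ∂haarAddCircle = inner ℂ (hg.toLp g) (hf.toLp f) := by
    rw [L2.inner_def]
    refine integral_congr_ae ?_
    filter_upwards [hf.coeFn_toLp, hg.coeFn_toLp] with t hft hgt
    rw [RCLike.inner_apply, hft, hgt, mul_comm]
  simpa only [hterm, hsum] using H

theorem fourierCoeff_mul_fourier (f : AddCircle T → ℂ) (l m : ℤ) :
    fourierCoeff (fun t => f t * fourier l t) m = fourierCoeff f (m - l) := by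
  refine integral_congr_ae (Filter.Eventually.of_forall fun t => ?_)
  simp only [smul_eq_mul]
  rw [show -(m - l) = -m + l by ring, fourier_add]
  ring

theorem hasSum_fourierCoeff_sub_mul_conj {f g : AddCircle T → ℂ} (hf : MemLp f 2 haarAddCircle)
    (hg : MemLp g 2 haarAddCircle) (j k : ℤ) :
    HasSum (fun s => fourierCoeff f (j - s) * conj (fourierCoeff g (k - s)))
      (fourierCoeff (fun t => f t * conj (g t)) (j - k)) := by
  have hg' : MemLp (fun t => g t * fourier (j - k) t) 2 haarAddCircle :=
    hg.congr_norm (hg.aestronglyMeasurable.mul (map_continuous _).aestronglyMeasurable)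
      (ae_of_all _ fun t => by simp [Circle.norm_coe])
  have hcoeff : fourierCoeff (fun t => f t * conj (g t)) (j - k) =
      ∫ t, f t * conj (g t * fourier (j - k) t) ∂haarAddCircle := by
    refine integral_congr_ae (ae_of_all _ fun t => ?_)
    simp only [smul_eq_mul, map_mul, ← fourier_neg]
    ring
  rw [hcoeff, ← (Equiv.subLeft j).hasSum_iff]
  convert hasSum_fourierCoeff_mul_conj hf hg' using 2 with s
  simp only [Function.comp_apply, Equiv.subLeft_apply, sub_sub_cancel, fourierCoeff_mul_fourier]
  rw [show k - (j - s) = s - (j - k) by ring]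

theorem fourierCoeff_mul_conj_sub_eq {f g : AddCircle T → ℂ} (hf : MemLp f 2 haarAddCircle)
    (hg : MemLp g 2 haarAddCircle) (j k : ℤ) (n : ℕ) :
    fourierCoeff (fun t => f t * conj (g t)) (j - k) =
      ∑ i ∈ Finset.range n, fourierCoeff f (j - i) * conj (fourierCoeff g (k - i)) +
        (∑' m : ℕ, fourierCoeff f (j + m + 1) * conj (fourierCoeff g (k + m + 1)) +
          ∑' m : ℕ, fourierCoeff f (j - n - m) * conj (fourierCoeff g (k - n - m))) := by
  have H := hasSum_fourierCoeff_sub_mul_conj hf hg j k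
  rw [← H.tsum_eq, tsum_int_eq_tsum_neg_add_sum_add_tsum H.summable n]
  simp only [show ∀ (a : ℤ) (m : ℕ), a - -((m : ℤ) + 1) = a + m + 1 from fun _ _ => by ring,
    show ∀ (a : ℤ) (m : ℕ), a - ((m : ℤ) + n) = a - n - m from fun _ _ => by ring]
  abel

end FourierL2

theorem widom_identity_self_general (f : 𝕋 → ℂ)
    (hf : MemLp f 2 haarAddCircle) (n : ℕ) :
    (∀ j k : Fin n,
      Summable (fun m : ℕ =>
        ‖fourierCoeff f (((j : ℕ) : ℤ) + (m : ℤ) + 1) *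
          (starRingEnd ℂ) (fourierCoeff f (((k : ℕ) : ℤ) + (m : ℤ) + 1))‖) ∧
      Summable (fun m : ℕ =>
        ‖fourierCoeff f (((j : ℕ) : ℤ) - (n : ℤ) - (m : ℤ)) *
          (starRingEnd ℂ) (fourierCoeff f (((k : ℕ) : ℤ) - (n : ℤ) - (m : ℤ)))‖)) ∧
    toeplitz n (fun x => f x * (starRingEnd ℂ) (f x))
        - toeplitz n f * (toeplitz n f)ᴴ
      = (Matrix.of fun j k : Fin n =>
          ∑' m : ℕ, fourierCoeff f (((j : ℕ) : ℤ) + (m : ℤ) + 1) *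
            (starRingEnd ℂ) (fourierCoeff f (((k : ℕ) : ℤ) + (m : ℤ) + 1)))
        + (Matrix.of fun j k : Fin n =>
          ∑' m : ℕ, fourierCoeff f (((j : ℕ) : ℤ) - (n : ℤ) - (m : ℤ)) *
            (starRingEnd ℂ) (fourierCoeff f (((k : ℕ) : ℤ) - (n : ℤ) - (m : ℤ)))) ∧
    (Matrix.of fun j k : Fin n =>
        ∑' m : ℕ, fourierCoeff f (((j : ℕ) : ℤ) + (m : ℤ) + 1) *
          (starRingEnd ℂ) (fourierCoeff f (((k : ℕ) : ℤ) + (m : ℤ) + 1))).PosSemidef ∧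
    (Matrix.of fun j k : Fin n =>
        ∑' m : ℕ, fourierCoeff f (((j : ℕ) : ℤ) - (n : ℤ) - (m : ℤ)) *
          (starRingEnd ℂ) (fourierCoeff f (((k : ℕ) : ℤ) - (n : ℤ) - (m : ℤ)))).PosSemidef := by
  have hneg : ∀ j : ℤ, Memℓp (fun m : ℕ => fourierCoeff f (j + m + 1)) 2 := fun j =>
    (memℓp_fourierCoeff hf).comp_injective (by norm_num) fun a b h => by simpa using h
  have hpos : ∀ j : ℤ, Memℓp (fun m : ℕ => fourierCoeff f (j - n - m)) 2 := fun j =>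
    (memℓp_fourierCoeff hf).comp_injective (by norm_num) fun a b h => by simpa using h
  refine ⟨fun j k => ⟨(hneg j).summable_norm_mul_conj (hneg k),
      (hpos j).summable_norm_mul_conj (hpos k)⟩, ?_,
    posSemidef_of_tsum_mul_conj _ fun j => hneg j, posSemidef_of_tsum_mul_conj _ fun j => hpos j⟩
  ext j k
  simp only [toeplitz, Matrix.sub_apply, Matrix.add_apply, mul_apply, conjTranspose_apply, of_apply,
    RCLike.star_def, Fin.sum_univ_eq_sum_range
      (fun i => fourierCoeff f (j - i) * conj (fourierCoeff f (k - i))),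
    fourierCoeff_mul_conj_sub_eq hf hf _ _ n, add_sub_cancel_left]

/-- equation (1) of the paper, Widom's identity for `g = f̄`: for
`f ∈ L²(𝕋)` and `n ≥ 1`, the `(j,k)` entry of `Tₙ(|f|²) − Tₙ(f)·Tₙ(f̄)` equals
`∑_{m≥1} f̂(j+m)·conj(f̂(k+m)) + ∑_{m≥0} f̂(j−n−m)·conj(f̂(k−n−m))`, both series
converging absolutely; in particular the matrix is the sum of the two positive
semidefinite Gram matrices formed by these series.  Here `Tₙ(f̄) = (Tₙ f)ᴴ` and
`|f|² = f·f̄`. -/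
theorem widom_identity_self (f : 𝕋 → ℂ)
    (hf : MemLp f 2 haarAddCircle) (n : ℕ) (hn : 1 ≤ n) :
    (∀ j k : Fin n,
      Summable (fun m : ℕ =>
        ‖fourierCoeff f (((j : ℕ) : ℤ) + (m : ℤ) + 1) *
          (starRingEnd ℂ) (fourierCoeff f (((k : ℕ) : ℤ) + (m : ℤ) + 1))‖) ∧
      Summable (fun m : ℕ =>
        ‖fourierCoeff f (((j : ℕ) : ℤ) - (n : ℤ) - (m : ℤ)) *
          (starRingEnd ℂ) (fourierCoeff f (((k : ℕ) : ℤ) - (n : ℤ) - (m : ℤ)))‖)) ∧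
    toeplitz n (fun x => f x * (starRingEnd ℂ) (f x))
        - toeplitz n f * (toeplitz n f)ᴴ
      = (Matrix.of fun j k : Fin n =>
          ∑' m : ℕ, fourierCoeff f (((j : ℕ) : ℤ) + (m : ℤ) + 1) *
            (starRingEnd ℂ) (fourierCoeff f (((k : ℕ) : ℤ) + (m : ℤ) + 1)))
        + (Matrix.of fun j k : Fin n =>
          ∑' m : ℕ, fourierCoeff f (((j : ℕ) : ℤ) - (n : ℤ) - (m : ℤ)) *
            (starRingEnd ℂ) (fourierCoeff f (((k : ℕ) : ℤ) - (n : ℤ) - (m : ℤ)))) ∧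
    (Matrix.of fun j k : Fin n =>
        ∑' m : ℕ, fourierCoeff f (((j : ℕ) : ℤ) + (m : ℤ) + 1) *
          (starRingEnd ℂ) (fourierCoeff f (((k : ℕ) : ℤ) + (m : ℤ) + 1))).PosSemidef ∧
    (Matrix.of fun j k : Fin n =>
        ∑' m : ℕ, fourierCoeff f (((j : ℕ) : ℤ) - (n : ℤ) - (m : ℤ)) *
          (starRingEnd ℂ) (fourierCoeff f (((k : ℕ) : ℤ) - (n : ℤ) - (m : ℤ)))).PosSemidef :=
  widom_identity_self_general f hf n
end
end
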